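/- arXiv:2507.20204 — 5 statements merged into one kernel-verified Lean document; each statement's English description precedes it below -/
import Mathlib

section
/- Let a : ℝ → ℝ³ be a differentiable trajectory with |a'(t)| < c for all t in [t_min, t_max] where c > 0. Fix a point x ∈ ℝ³ and define the arrival time T(t) = t + c⁻¹|x - a(t)|. Then for any t_l, t_j ∈ [t_min, t_max], T(t_j) > T(t_l) if and only if t_j > t_l. -/
/-!
A subsonic source moves by less than `c (t - s)` between times `s < t`; for the vector-valued
trajectory this follows from the scalar mean value inequality applied to a norming functional
of `a t - a s`. By the triangle inequality the distance to `x` then also changes by less than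
`c (t - s)`, so `T s < T t`: the arrival time is strictly increasing on `[t_min, t_max]`.
-/

open Set

theorem Convex.norm_image_sub_lt_mul_sub_of_norm_deriv_lt {E : Type*} [NormedAddCommGroup E]
    [NormedSpace ℝ E] {D : Set ℝ} (hD : Convex ℝ D) {f : ℝ → E} (hf : ContinuousOn f D)
    (hf' : DifferentiableOn ℝ f (interior D)) {C : ℝ}
    (lt_hf' : ∀ t ∈ interior D, ‖deriv f t‖ < C) {s t : ℝ} (hs : s ∈ D) (ht : t ∈ D)
    (hst : s < t) : ‖f t - f s‖ < C * (t - s) := by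
  obtain ⟨φ, hφ, hφ_eq⟩ := exists_dual_vector'' ℝ (f t - f s)
  have hderiv : ∀ u ∈ interior D, deriv (φ ∘ f) u = φ (deriv f u) := fun u hu =>
    (φ.hasFDerivAt.comp_hasDerivAt u
      ((hf' u hu).differentiableAt (isOpen_interior.mem_nhds hu)).hasDerivAt).deriv
  have hφf : φ (f t) - φ (f s) < C * (t - s) := by
    refine hD.image_sub_lt_mul_sub_of_deriv_lt (φ.continuous.comp_continuousOn hf)
      (φ.differentiable.comp_differentiableOn hf') (fun u hu => ?_) s hs t ht hst
    rw [hderiv u hu]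
    calc φ (deriv f u) ≤ ‖φ (deriv f u)‖ := Real.le_norm_self _
      _ ≤ ‖deriv f u‖ := φ.le_of_opNorm_le hφ _ |>.trans_eq (one_mul _)
      _ < C := lt_hf' u hu
  rwa [← map_sub, hφ_eq] at hφf

theorem strictMonoOn_add_inv_mul_norm_sub {E : Type*} [NormedAddCommGroup E] {D : Set ℝ}
    {f : ℝ → E} {c : ℝ} (hc : 0 < c) (hf : ∀ s ∈ D, ∀ t ∈ D, s < t → ‖f t - f s‖ < c * (t - s))
    (x : E) : StrictMonoOn (fun t => t + c⁻¹ * ‖x - f t‖) D := by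
  intro s hs t ht hst
  have htri : ‖x - f s‖ - ‖x - f t‖ ≤ ‖f t - f s‖ := by
    simpa using norm_sub_norm_le (x - f s) (x - f t)
  have hmove := hf s hs t ht hst
  have hdist : c⁻¹ * (‖x - f s‖ - ‖x - f t‖) < t - s := by
    rw [inv_mul_lt_iff₀ hc]
    linarith
  dsimp only
  linarith

theorem arrival_time_order_general
    (c tmin tmax : ℝ)
    (a : ℝ → EuclideanSpace ℝ (Fin 3))
    (ha : Differentiable ℝ a)
    (hsub : ∀ t ∈ Set.Icc tmin tmax, ‖deriv a t‖ < c)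
    (x : EuclideanSpace ℝ (Fin 3))
    (T : ℝ → ℝ) (hT : ∀ t, T t = t + c⁻¹ * ‖x - a t‖) :
    ∀ tl ∈ Set.Icc tmin tmax, ∀ tj ∈ Set.Icc tmin tmax,
      (T tj > T tl ↔ tj > tl) := by
  intro tl hl tj hj
  have hc : 0 < c := (norm_nonneg _).trans_lt (hsub tl hl)
  have hmove : ∀ s ∈ Icc tmin tmax, ∀ t ∈ Icc tmin tmax, s < t → ‖a t - a s‖ < c * (t - s) :=
    fun s hs t ht => (convex_Icc tmin tmax).norm_image_sub_lt_mul_sub_of_norm_deriv_lt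
      ha.continuous.continuousOn ha.differentiableOn
      (fun u hu => hsub u (interior_subset hu)) hs ht
  have hT_mono : StrictMonoOn T (Icc tmin tmax) := by
    rw [funext hT]
    exact strictMonoOn_add_inv_mul_norm_sub hc hmove x
  exact hT_mono.lt_iff_lt hl hj

theorem arrival_time_order
    (c tmin tmax : ℝ) (hc : 0 < c)
    (a : ℝ → EuclideanSpace ℝ (Fin 3))
    (ha : Differentiable ℝ a)
    (hsub : ∀ t ∈ Set.Icc tmin tmax, ‖deriv a t‖ < c)
    (x : EuclideanSpace ℝ (Fin 3))
    (T : ℝ → ℝ) (hT : ∀ t, T t = t + c⁻¹ * ‖x - a t‖) :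
    ∀ tl ∈ Set.Icc tmin tmax, ∀ tj ∈ Set.Icc tmin tmax,
      (T tj > T tl ↔ tj > tl) :=
  arrival_time_order_general c tmin tmax a ha hsub x T hT
end

section
/- Let a : ℝ → ℝ³ be differentiable with ‖a'(t)‖ < c on [t_min, t_max], c > 0, and fix x ∈ ℝ³. Then the arrival time map T(t) = t + c⁻¹‖x - a(t)‖ is strictly increasing on [t_min, t_max]; in particular it is injective. -/
theorem arrival_time_strictMono
    (c tmin tmax : ℝ) (hc : 0 < c)
    (a : ℝ → EuclideanSpace ℝ (Fin 3))
    (ha : Differentiable ℝ a)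
    (hsub : ∀ t ∈ Set.Icc tmin tmax, ‖deriv a t‖ < c)
    (x : EuclideanSpace ℝ (Fin 3))
    (T : ℝ → ℝ) (hT : ∀ t, T t = t + c⁻¹ * ‖x - a t‖) :
    StrictMonoOn T (Set.Icc tmin tmax) ∧ Set.InjOn T (Set.Icc tmin tmax) := by
  have key : StrictMonoOn T (Set.Icc tmin tmax) := by
    intro s hs t ht hst
    -- deriv a is interval integrable on [s,t]
    have hsub' : ∀ u ∈ Set.Icc s t, ‖deriv a u‖ < c := fun u hu =>
      hsub u ⟨hs.1.trans hu.1, hu.2.trans ht.2⟩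
    have hmeas : MeasureTheory.AEStronglyMeasurable (deriv a) MeasureTheory.volume :=
      (measurable_deriv a).aestronglyMeasurable
    have hint : IntervalIntegrable (deriv a) MeasureTheory.volume s t := by
      rw [intervalIntegrable_iff_integrableOn_Ioc_of_le hst.le]
      apply MeasureTheory.Measure.integrableOn_of_bounded
        (measure_Ioc_lt_top).ne hmeas (M := c)
        (by filter_upwards [MeasureTheory.ae_restrict_mem measurableSet_Ioc] with u hu
            exact (hsub' u ⟨hu.1.le, hu.2⟩).le)
    have hnorm_int : IntervalIntegrable (fun u => ‖deriv a u‖) MeasureTheory.volume s t :=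
      hint.norm
    -- FTC
    have hftc : ∫ u in s..t, deriv a u = a t - a s :=
      intervalIntegral.integral_deriv_eq_sub (fun u _ => ha.differentiableAt) hint
    have hle : ‖a t - a s‖ ≤ ∫ u in s..t, ‖deriv a u‖ := by
      rw [← hftc]
      exact intervalIntegral.norm_integral_le_integral_norm hst.le
    have hlt : ∫ u in s..t, ‖deriv a u‖ < c * (t - s) := by
      have hpos : 0 < ∫ u in s..t, (c - ‖deriv a u‖) := by
        apply intervalIntegral.intervalIntegral_pos_of_pos_on
          (intervalIntegrable_const.sub hnorm_int)
        · intro u hu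
          have := hsub' u ⟨hu.1.le, hu.2.le⟩
          linarith
        · exact hst
      have hsplit : ∫ u in s..t, (c - ‖deriv a u‖) =
          (∫ u in s..t, (c : ℝ)) - ∫ u in s..t, ‖deriv a u‖ :=
        intervalIntegral.integral_sub intervalIntegrable_const hnorm_int
      rw [hsplit, intervalIntegral.integral_const, smul_eq_mul] at hpos
      linarith
    have hkey : ‖a t - a s‖ < c * (t - s) := lt_of_le_of_lt hle hlt
    have htri : ‖x - a s‖ - ‖x - a t‖ ≤ ‖a t - a s‖ := by
      have := norm_sub_norm_le (x - a s) (x - a t)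
      have heq : (x - a s) - (x - a t) = a t - a s := by abel
      rwa [heq] at this
    rw [hT s, hT t]
    have hcinv : 0 < c⁻¹ := inv_pos.mpr hc
    have : c⁻¹ * (‖x - a s‖ - ‖x - a t‖) < c⁻¹ * (c * (t - s)) := by
      exact mul_lt_mul_of_pos_left (lt_of_le_of_lt htri hkey) hcinv
    rw [inv_mul_cancel_left₀ hc.ne'] at this
    linarith
  exact ⟨key, key.injOn⟩
end

section
/- Let c > 0, x₁ = 0 and x₂,…,x₅ ∈ ℝ³, and suppose (a, t), (ã, t̃) ∈ ℝ³ × ℝ produce equal arrival times, i.e. t + c⁻¹‖x_k − a‖ = t̃ + c⁻¹‖x_k − ã‖ =: T_k for all k = 1,…,5. If the 4×4 matrix A with rows (x_kᵀ, c²(T₁ − T_k)) for k = 2,…,5 is invertible, then a = ã and t = t̃. -/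
/-!
A source `(b, s)` producing the arrival times `T` satisfies `‖x k - b‖ = c (T k - s)`. Subtracting
from the square of this the squared equation for the reference point `x 0 = 0`, i.e.
`‖b‖ = c (T 0 - s)`, cancels `‖b‖²` and `s²` and leaves an equation *linear* in `(b, s)`:
row `k` of the system `A (b, s) = r` with a right-hand side `r` depending only on `x` and `T`.
Both sources solve the same invertible system, hence coincide.
-/

open Matrix

theorem two_mul_inner_add_eq_of_norm_eq_mul {E : Type*} [NormedAddCommGroup E]
    [InnerProductSpace ℝ E] {x b : E} {c s τ₀ τ : ℝ}
    (h₀ : ‖b‖ = c * (τ₀ - s)) (h : ‖x - b‖ = c * (τ - s)) :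
    2 * inner ℝ x b + 2 * s * (c ^ 2 * (τ₀ - τ)) =
      ‖x‖ ^ 2 + c ^ 2 * τ₀ ^ 2 - c ^ 2 * τ ^ 2 := by
  have := norm_sub_sq_real x b
  rw [h, h₀] at this
  linear_combination this

theorem mulVec_snoc_apply {R m : Type*} [CommSemiring R] {n : ℕ} (A : Matrix m (Fin (n + 1)) R)
    (v : Fin n → R) (s : R) (i : m) :
    (A *ᵥ Fin.snoc v s) i = ∑ j, A i j.castSucc * v j + A i (Fin.last n) * s := by
  simp [mulVec, dotProduct, Fin.sum_univ_castSucc]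

section Arrival

variable {n : ℕ} {c : ℝ} {x : Fin (n + 2) → EuclideanSpace ℝ (Fin n)} {T : Fin (n + 2) → ℝ}
  {A : Matrix (Fin (n + 1)) (Fin (n + 1)) ℝ}

theorem mulVec_snoc_eq_of_arrival_times (hc : c ≠ 0) (hx₀ : x 0 = 0)
    (hA : ∀ i, (∀ j, A i j.castSucc = x i.succ j) ∧ A i (Fin.last n) = c ^ 2 * (T 0 - T i.succ))
    {b : EuclideanSpace ℝ (Fin n)} {s : ℝ} (hT : ∀ k, T k = s + c⁻¹ * ‖x k - b‖) :
    A *ᵥ Fin.snoc (⇑b) s =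
      fun i => (‖x i.succ‖ ^ 2 + c ^ 2 * T 0 ^ 2 - c ^ 2 * T i.succ ^ 2) / 2 := by
  have hdist (k) : ‖x k - b‖ = c * (T k - s) := by
    rw [hT k]; field_simp; ring
  have h₀ : ‖b‖ = c * (T 0 - s) := by simpa [hx₀] using hdist 0
  ext i
  have key := two_mul_inner_add_eq_of_norm_eq_mul h₀ (hdist i.succ)
  have hrow : ∑ j, A i j.castSucc * b j = inner ℝ (x i.succ) b := by
    simp only [(hA i).1, EuclideanSpace.inner_eq_star_dotProduct, star_trivial, dotProduct,
      mul_comm]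
  rw [mulVec_snoc_apply, hrow, (hA i).2]
  linarith

end Arrival

theorem five_point_uniqueness
    (c : ℝ) (hc : 0 < c)
    (x : Fin 5 → EuclideanSpace ℝ (Fin 3)) (hx1 : x 0 = 0)
    (a a' : EuclideanSpace ℝ (Fin 3)) (t t' : ℝ)
    (T : Fin 5 → ℝ) (hT : ∀ k, T k = t + c⁻¹ * ‖x k - a‖)
    (hEq : ∀ k, t + c⁻¹ * ‖x k - a‖ = t' + c⁻¹ * ‖x k - a'‖)
    (A : Matrix (Fin 4) (Fin 4) ℝ)
    (hA : ∀ i : Fin 4, (∀ j : Fin 3, A i j.castSucc = x i.succ j) ∧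
      A i 3 = c ^ 2 * (T 0 - T i.succ))
    (hinv : IsUnit A) :
    a = a' ∧ t = t' := by
  have hsys := mulVec_snoc_eq_of_arrival_times hc.ne' hx1 hA hT
  have hsys' := mulVec_snoc_eq_of_arrival_times hc.ne' hx1 hA fun k => (hT k).trans (hEq k)
  obtain ⟨hb, hs⟩ :=
    Fin.snoc_injective2 (mulVec_injective_iff_isUnit.mpr hinv (hsys.trans hsys'.symm))
  exact ⟨WithLp.ofLp_injective 2 hb, hs⟩
end

section
/- Let c > 0, h > 0, and set x₁ = 0, x₂ = (0,r₂,0), x₃ = (0,r₃,0), x₄ = (r₄,0,0), x₅ = (r₅,0,0), x₆ = (0,0,h), x₇ = (0,0,−h), where r₂, r₃ are distinct and nonzero and r₄, r₅ are distinct and nonzero. Suppose a, ã ∈ ℝ³ and t, t̃ ∈ ℝ satisfy t + c⁻¹‖x_k − a‖ = t̃ + c⁻¹‖x_k − ã‖ for all k = 1,…,7. Then a = ã and t = t̃. -/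
/-!
Put `d = c (t' - t)`, so that `‖p - a‖ = ‖p - a'‖ + d` at every observation point `p`.
If `d = 0`, the points `x₂, x₄, x₆` are equidistant from `a` and `a'`, as is the origin `x₁`, so
`a - a'` is orthogonal to all three axes. If `d ≠ 0`, then on a line `{r • u}` through `x₁ = 0`
the relation, squared twice, becomes an identity affine in `r`; holding for two nonzero values of
`r`, it forces `a'` onto the line. The `x`-axis and the `z`-axis then give `a' = 0`, so that
`‖x₆ - a‖ = ‖x₆‖ + ‖a‖ = ‖x₇ - a‖`, and the parallelogram law yields `a = 0`, i.e. `d = 0`.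
-/

open RealInnerProductSpace

section InnerProductSpace

variable {E : Type*} [NormedAddCommGroup E] [InnerProductSpace ℝ E]

theorem norm_smul_sub_sq {u : E} (hu : ‖u‖ = 1) (r : ℝ) (b : E) :
    ‖r • u - b‖ ^ 2 = r ^ 2 - 2 * r * ⟪u, b⟫ + ‖b‖ ^ 2 := by
  rw [norm_sub_sq_real, norm_smul, real_inner_smul_left, hu, Real.norm_eq_abs, mul_one, sq_abs]
  ring

theorem inner_eq_of_norm_sub_eq_norm_sub {u a a' : E} {r : ℝ} (hu : ‖u‖ = 1) (hr : r ≠ 0)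
    (h0 : ‖a‖ = ‖a'‖) (hru : ‖r • u - a‖ = ‖r • u - a'‖) : ⟪u, a⟫ = ⟪u, a'⟫ := by
  have key : r * (⟪u, a⟫ - ⟪u, a'⟫) = 0 := by
    linear_combination (norm_smul_sub_sq hu r a - norm_smul_sub_sq hu r a'
      - congrArg (· ^ 2) hru + congrArg (· ^ 2) h0) / 2
  exact sub_eq_zero.mp ((mul_eq_zero.mp key).resolve_left hr)

theorem sq_sub_inner_sq_mul_eq {u a a' : E} {d r : ℝ} (hu : ‖u‖ = 1) (hr : r ≠ 0)
    (h0 : ‖a‖ = ‖a'‖ + d) (hru : ‖r • u - a‖ = ‖r • u - a'‖ + d) :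
    (d ^ 2 - ⟪u, a' - a⟫ ^ 2) * r = 2 * d * (d * ⟪u, a'⟫ + ⟪u, a' - a⟫ * ‖a'‖) := by
  have e := norm_smul_sub_sq hu r a
  have e' := norm_smul_sub_sq hu r a'
  rw [hru, h0] at e
  have hlin : d * ‖r • u - a'‖ = r * ⟪u, a' - a⟫ + d * ‖a'‖ := by
    rw [inner_sub_right]
    linear_combination (e - e') / 2
  have key : r * ((d ^ 2 - ⟪u, a' - a⟫ ^ 2) * r
      - 2 * d * (d * ⟪u, a'⟫ + ⟪u, a' - a⟫ * ‖a'‖)) = 0 := by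
    linear_combination (d * ‖r • u - a'‖ + r * ⟪u, a' - a⟫ + d * ‖a'‖) * hlin - d ^ 2 * e'
  exact sub_eq_zero.mp ((mul_eq_zero.mp key).resolve_left hr)

theorem inner_sq_eq_norm_sq_of_norm_sub_eq {u a a' : E} {d r s : ℝ} (hu : ‖u‖ = 1)
    (hd : d ≠ 0) (hr : r ≠ 0) (hs : s ≠ 0) (hrs : r ≠ s) (h0 : ‖a‖ = ‖a'‖ + d)
    (hru : ‖r • u - a‖ = ‖r • u - a'‖ + d) (hsu : ‖s • u - a‖ = ‖s • u - a'‖ + d) :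
    ⟪u, a'⟫ ^ 2 = ‖a'‖ ^ 2 := by
  have hr' := sq_sub_inner_sq_mul_eq hu hr h0 hru
  have hs' := sq_sub_inner_sq_mul_eq hu hs h0 hsu
  have hA : ⟪u, a' - a⟫ ^ 2 = d ^ 2 := by
    have : (d ^ 2 - ⟪u, a' - a⟫ ^ 2) * (r - s) = 0 := by linear_combination hr' - hs'
    linear_combination -((mul_eq_zero.mp this).resolve_right (sub_ne_zero.mpr hrs))
  have hB : d * ⟪u, a'⟫ + ⟪u, a' - a⟫ * ‖a'‖ = 0 := by
    rw [hA, sub_self, zero_mul] at hr'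
    exact (mul_eq_zero.mp hr'.symm).resolve_left (mul_ne_zero two_ne_zero hd)
  have : d ^ 2 * (⟪u, a'⟫ ^ 2 - ‖a'‖ ^ 2) = 0 := by
    linear_combination (d * ⟪u, a'⟫ - ⟪u, a' - a⟫ * ‖a'‖) * hB + ‖a'‖ ^ 2 * hA
  exact sub_eq_zero.mp ((mul_eq_zero.mp this).resolve_left (pow_ne_zero 2 hd))

theorem Orthonormal.eq_zero_of_inner_sq_eq_norm_sq {ι : Type*} {v : ι → E}
    (hv : Orthonormal ℝ v) {i j : ι} (hij : i ≠ j) {b : E}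
    (hi : ⟪v i, b⟫ ^ 2 = ‖b‖ ^ 2) (hj : ⟪v j, b⟫ ^ 2 = ‖b‖ ^ 2) : b = 0 := by
  classical
  have bessel := hv.sum_inner_products_le b (s := {i, j})
  rw [Finset.sum_pair hij, Real.norm_eq_abs, Real.norm_eq_abs, sq_abs, sq_abs, hi, hj] at bessel
  exact norm_eq_zero.mp (by nlinarith [norm_nonneg b])

theorem eq_zero_of_norm_sub_eq_of_norm_neg_sub_eq {w b : E} (hw : w ≠ 0)
    (hsub : ‖w - b‖ = ‖w‖ + ‖b‖) (hneg : ‖-w - b‖ = ‖w‖ + ‖b‖) : b = 0 := by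
  have hadd : ‖w + b‖ = ‖w‖ + ‖b‖ := by rwa [← norm_neg, neg_add']
  have : ‖w‖ * ‖b‖ = 0 := by
    linear_combination (parallelogram_law_with_norm ℝ w b - congrArg (· ^ 2) hadd
      - congrArg (· ^ 2) hsub) / 4
  exact norm_eq_zero.mp ((mul_eq_zero.mp this).resolve_left (norm_ne_zero_iff.mpr hw))

end InnerProductSpace

theorem EuclideanSpace.single_eq_smul_single_one {ι : Type*} [DecidableEq ι] (i : ι) (r : ℝ) :
    EuclideanSpace.single i r = r • EuclideanSpace.single i 1 := by
  ext j
  simp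

theorem seven_point_uniqueness_general
    (c h r₂ r₄ r₅ : ℝ) (hc : 0 < c) (hh : 0 < h)
    (h2 : r₂ ≠ 0)
    (h45 : r₄ ≠ r₅) (h4 : r₄ ≠ 0) (h5 : r₅ ≠ 0)
    (x : Fin 7 → EuclideanSpace ℝ (Fin 3))
    (hx1 : x 0 = 0)
    (hx2 : x 1 = EuclideanSpace.single 1 r₂)
    (hx4 : x 3 = EuclideanSpace.single 0 r₄)
    (hx5 : x 4 = EuclideanSpace.single 0 r₅)
    (hx6 : x 5 = EuclideanSpace.single 2 h)
    (hx7 : x 6 = EuclideanSpace.single 2 (-h))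
    (a a' : EuclideanSpace ℝ (Fin 3)) (t t' : ℝ)
    (hEq : ∀ k, t + c⁻¹ * ‖x k - a‖ = t' + c⁻¹ * ‖x k - a'‖) :
    a = a' ∧ t = t' := by
  set e : Fin 3 → EuclideanSpace ℝ (Fin 3) := fun i => EuclideanSpace.single i 1
  set d := c * (t' - t)
  have hd : ∀ k, ‖x k - a‖ = ‖x k - a'‖ + d := fun k => by
    have := hEq k
    field_simp at this
    linear_combination this
  have h0 : ‖a‖ = ‖a'‖ + d := by simpa [hx1] using hd 0
  have he : ∀ i, ‖e i‖ = 1 := fun i => by simp [e]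
  have hon : ∀ {k i r}, x k = EuclideanSpace.single i r → ‖r • e i - a‖ = ‖r • e i - a'‖ + d :=
    fun hk => by rw [← EuclideanSpace.single_eq_smul_single_one, ← hk]; exact hd _
  by_cases hd0 : d = 0
  · have hcoord : ∀ {k i r}, r ≠ 0 → x k = EuclideanSpace.single i r → a i = a' i :=
      fun hr hk => by
        simpa [e, EuclideanSpace.inner_single_left] using inner_eq_of_norm_sub_eq_norm_sub
          (he _) hr (by simpa [hd0] using h0) (by simpa [hd0] using hon hk)
    refine ⟨?_, (sub_eq_zero.mp ((mul_eq_zero.mp hd0).resolve_left hc.ne')).symm⟩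
    ext i
    fin_cases i
    exacts [hcoord h4 hx4, hcoord h2 hx2, hcoord hh.ne' hx6]
  · have ha' : a' = 0 := EuclideanSpace.orthonormal_single.eq_zero_of_inner_sq_eq_norm_sq
      (by decide : (0 : Fin 3) ≠ 2)
      (inner_sq_eq_norm_sq_of_norm_sub_eq (he 0) hd0 h4 h5 h45 h0 (hon hx4) (hon hx5))
      (inner_sq_eq_norm_sq_of_norm_sub_eq (he 2) hd0 hh.ne' (neg_ne_zero.mpr hh.ne')
        (by linarith) h0 (hon hx6) (hon hx7))
    subst ha'
    rw [norm_zero, zero_add] at h0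
    have hsub := hon hx6
    have hneg := hon hx7
    rw [sub_zero, ← h0] at hsub hneg
    rw [neg_smul, norm_neg] at hneg
    have ha : a = 0 :=
      eq_zero_of_norm_sub_eq_of_norm_neg_sub_eq (smul_ne_zero hh.ne' (by simp [e])) hsub hneg
    exact (hd0 (by rw [← h0, ha, norm_zero])).elim

theorem seven_point_uniqueness
    (c h r₂ r₃ r₄ r₅ : ℝ) (hc : 0 < c) (hh : 0 < h)
    (h23 : r₂ ≠ r₃) (h2 : r₂ ≠ 0) (h3 : r₃ ≠ 0)
    (h45 : r₄ ≠ r₅) (h4 : r₄ ≠ 0) (h5 : r₅ ≠ 0)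
    (x : Fin 7 → EuclideanSpace ℝ (Fin 3))
    (hx1 : x 0 = 0)
    (hx2 : x 1 = EuclideanSpace.single 1 r₂)
    (hx3 : x 2 = EuclideanSpace.single 1 r₃)
    (hx4 : x 3 = EuclideanSpace.single 0 r₄)
    (hx5 : x 4 = EuclideanSpace.single 0 r₅)
    (hx6 : x 5 = EuclideanSpace.single 2 h)
    (hx7 : x 6 = EuclideanSpace.single 2 (-h))
    (a a' : EuclideanSpace ℝ (Fin 3)) (t t' : ℝ)
    (hEq : ∀ k, t + c⁻¹ * ‖x k - a‖ = t' + c⁻¹ * ‖x k - a'‖) :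
    a = a' ∧ t = t' :=
  seven_point_uniqueness_general c h r₂ r₄ r₅ hc hh h2 h45 h4 h5 x hx1 hx2 hx4 hx5 hx6 hx7 a a' t t'
    hEq
end

section
/- Let c > 0 and let a : ℝ → ℝ³ be C¹ with ‖a'(t)‖ < c on [t_min, t_max]. Fix x ∈ ℝ³ and let T(t) = t + c⁻¹‖x − a(t)‖. Then for all s, t ∈ [t_min, t_max] with s < t, (t − s)(1 − c⁻¹ sup_{τ∈[s,t]} ‖a'(τ)‖) ≤ T(t) − T(s) ≤ (t − s)(1 + c⁻¹ sup_{τ∈[s,t]} ‖a'(τ)‖). -/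
/-! The bounds say that the distance `‖x - a t‖` from the observer to the source is Lipschitz in
`t` with constant `M = sup ‖a'‖` on `[s, t]`: by the reverse triangle inequality its increment is at
most `‖a t - a s‖`, which the mean value inequality bounds by `M (t - s)`. Then
`T t - T s = (t - s) + c⁻¹ (‖x - a t‖ - ‖x - a s‖)` lies within `c⁻¹ M (t - s)` of `t - s`. -/

open Set

theorem norm_sub_le_sSup_norm_deriv_mul {E : Type*} [NormedAddCommGroup E] [NormedSpace ℝ E]
    {f : ℝ → E} (hf : ContDiff ℝ 1 f) {s t : ℝ} (hst : s ≤ t) :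
    ‖f t - f s‖ ≤ sSup ((fun τ => ‖deriv f τ‖) '' Icc s t) * (t - s) := by
  have hbdd : BddAbove ((fun τ => ‖deriv f τ‖) '' Icc s t) :=
    isCompact_Icc.bddAbove_image (hf.continuous_deriv le_rfl).norm.continuousOn
  refine norm_image_sub_le_of_norm_deriv_le_segment'
    (fun τ _ => ((hf.differentiable one_ne_zero) τ).hasDerivAt.hasDerivWithinAt)
    (fun τ hτ => le_csSup hbdd ⟨τ, Ico_subset_Icc_self hτ, rfl⟩) t ⟨hst, le_rfl⟩

theorem abs_norm_sub_sub_norm_sub_le {E : Type*} [SeminormedAddCommGroup E] (x y z : E) :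
    |‖x - y‖ - ‖x - z‖| ≤ ‖y - z‖ := by
  simpa only [dist_eq_norm, norm_sub_rev _ x] using abs_dist_sub_le y z x

theorem arrival_time_biLipschitz_general
    (c tmin tmax : ℝ) (hc : 0 < c)
    (a : ℝ → EuclideanSpace ℝ (Fin 3))
    (ha : ContDiff ℝ 1 a)
    (x : EuclideanSpace ℝ (Fin 3))
    (T : ℝ → ℝ) (hT : ∀ t, T t = t + c⁻¹ * ‖x - a t‖) :
    ∀ s ∈ Set.Icc tmin tmax, ∀ t ∈ Set.Icc tmin tmax, s < t →
      (t - s) * (1 - c⁻¹ * sSup ((fun τ => ‖deriv a τ‖) '' Set.Icc s t)) ≤ T t - T s ∧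
      T t - T s ≤ (t - s) * (1 + c⁻¹ * sSup ((fun τ => ‖deriv a τ‖) '' Set.Icc s t)) := by
  intro s _ t _ hst
  set M := sSup ((fun τ => ‖deriv a τ‖) '' Icc s t)
  have hdist : |‖x - a t‖ - ‖x - a s‖| ≤ M * (t - s) :=
    (abs_norm_sub_sub_norm_sub_le x (a t) (a s)).trans
      (norm_sub_le_sSup_norm_deriv_mul ha hst.le)
  have hscaled : |c⁻¹ * (‖x - a t‖ - ‖x - a s‖)| ≤ c⁻¹ * (M * (t - s)) := by
    rw [abs_mul, abs_of_pos (inv_pos.2 hc)]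
    exact mul_le_mul_of_nonneg_left hdist (inv_pos.2 hc).le
  obtain ⟨hlower, hupper⟩ := abs_le.1 hscaled
  rw [hT t, hT s]
  constructor <;> linarith

theorem arrival_time_biLipschitz
    (c tmin tmax : ℝ) (hc : 0 < c)
    (a : ℝ → EuclideanSpace ℝ (Fin 3))
    (ha : ContDiff ℝ 1 a)
    (hsub : ∀ t ∈ Set.Icc tmin tmax, ‖deriv a t‖ < c)
    (x : EuclideanSpace ℝ (Fin 3))
    (T : ℝ → ℝ) (hT : ∀ t, T t = t + c⁻¹ * ‖x - a t‖) :
    ∀ s ∈ Set.Icc tmin tmax, ∀ t ∈ Set.Icc tmin tmax, s < t →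
      (t - s) * (1 - c⁻¹ * sSup ((fun τ => ‖deriv a τ‖) '' Set.Icc s t)) ≤ T t - T s ∧
      T t - T s ≤ (t - s) * (1 + c⁻¹ * sSup ((fun τ => ‖deriv a τ‖) '' Set.Icc s t)) :=
  arrival_time_biLipschitz_general c tmin tmax hc a ha x T hT
end
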